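/- Let f be a piecewise contracting interval map satisfying the separation property and x ∈ X̃ with itinerary θ. Then there exists m₀ ≥ 1 and a constant β(x) such that p(θ, n) = n·#Δ_lr(x) + β(x) for all n ≥ m₀, where Δ_lr(x) is the set of discontinuities left-right-recurrently visited by the orbit of x. Moreover p(θ,1) − #Δ_lr(x) ≤ β(x) ≤ p(θ,1) − #Δ + m₀(#Δ − #Δ_lr(x)). -/

import Mathlib

open Set

/-- The contraction pieces of a piecewise contracting interval map on `[c 0, c N]`:
`X₁ = [c₀, c₁)`, `Xᵢ = (c_{i-1}, c_i)` for `1 < i < N`, `X_N = (c_{N-1}, c_N]`. -/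
def ivlPiece (N : ℕ) (c : ℕ → ℝ) (i : Fin N) : Set ℝ :=
  if i.val = 0 then Set.Ico (c 0) (c 1)
  else if i.val = N - 1 then Set.Ioc (c (N - 1)) (c N)
  else Set.Ioo (c i.val) (c (i.val + 1))

/-- The atom of a word `w = [i₁, …, iₙ]`:
`A_{i₁…iₙ} = F_{iₙ} ∘ ⋯ ∘ F_{i₁}(X)`, `F_i(A) = closure (f '' (A ∩ X_i))`, `X = [c 0, c N]`. -/
def ivlAtom (N : ℕ) (c : ℕ → ℝ) (f : ℝ → ℝ) (w : List (Fin N)) : Set ℝ :=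
  w.foldl (fun A i => closure (f '' (A ∩ ivlPiece N c i))) (Set.Icc (c 0) (c N))

/-- The discontinuity set `Δ = {c₁, …, c_{N-1}}`. -/
def ivlDelta (N : ℕ) (c : ℕ → ℝ) : Set ℝ :=
  {y | ∃ i : ℕ, 0 < i ∧ i < N ∧ y = c i}

/-- `Δ_lr^n(x)`: the discontinuities `c_i` that are n-left-right visited by the orbit of
`x`: some atom of generation `n` visited by the orbit of `f^n(x)` contains `c_i` and the
orbit enters it on both sides of `c_i`. -/
def ivlDeltaLRn (N : ℕ) (c : ℕ → ℝ) (f : ℝ → ℝ) (n : ℕ) (x : ℝ) : Set ℝ :=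
  {y | ∃ i : ℕ, ∃ h1 : 0 < i, ∃ h2 : i < N, y = c i ∧
    ∃ w : List (Fin N), w.length = n ∧ y ∈ ivlAtom N c f w ∧
      (∃ t : ℕ, f^[t + n] x ∈ ivlAtom N c f w ∩ ivlPiece N c ⟨i - 1, by omega⟩) ∧
      (∃ t : ℕ, f^[t + n] x ∈ ivlAtom N c f w ∩ ivlPiece N c ⟨i, h2⟩)}

/-- `Δ_lr(x)`: the discontinuities that are left-right recurrently visited. -/
def ivlDeltaLR (N : ℕ) (c : ℕ → ℝ) (f : ℝ → ℝ) (x : ℝ) : Set ℝ :=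
  {y | ∀ n : ℕ, 1 ≤ n → y ∈ ivlDeltaLRn N c f n x}

/-- The word `θ_t θ_{t+1} … θ_{t+n-1}`. -/
def itinWord {N : ℕ} (θ : ℕ → Fin N) (t n : ℕ) : List (Fin N) :=
  (List.range n).map fun k => θ (t + k)

/-- The set of factors of length `n` of `θ`. -/
def seqFactors {N : ℕ} (θ : ℕ → Fin N) (n : ℕ) : Set (List (Fin N)) :=
  {w | ∃ t : ℕ, w = itinWord θ t n}

/-- The complexity function `p(θ, n)`. -/
noncomputable def seqComplexity {N : ℕ} (θ : ℕ → Fin N) (n : ℕ) : ℕ :=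
  (seqFactors θ n).ncard

set_option linter.unusedSectionVars false

section Basic
variable {N : ℕ} (hN : 2 ≤ N) {c : ℕ → ℝ} (hc : ∀ i : ℕ, i < N → c i < c (i + 1))

include hc in
lemma c_strictmono : ∀ i j : ℕ, i < j → j ≤ N → c i < c j := by
  intro i j hij hjN
  induction j with
  | zero => omega
  | succ k ih =>
    rcases Nat.lt_succ_iff_lt_or_eq.mp hij with h | h
    · exact lt_trans (ih h (by omega)) (hc k (by omega))
    · subst h; exact hc i (by omega)

include hc in
lemma c_mono : ∀ i j : ℕ, i ≤ j → j ≤ N → c i ≤ c j := by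
  intro i j hij hjN
  rcases eq_or_lt_of_le hij with h | h
  · simp [h]
  · exact (c_strictmono hc i j h hjN).le

include hN in
lemma piece_sub_Icc (i : Fin N) : ivlPiece N c i ⊆ Set.Icc (c i.val) (c (i.val + 1)) := by
  unfold ivlPiece
  split_ifs with h1 h2
  · rw [h1]; exact Set.Ico_subset_Icc_self
  · rw [h2]; have : N - 1 + 1 = N := by omega
    rw [this]; exact Set.Ioc_subset_Icc_self
  · exact Set.Ioo_subset_Icc_self

lemma piece_lt_left (i : Fin N) (hi : i.val ≠ 0) {y : ℝ} (hy : y ∈ ivlPiece N c i) :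
    c i.val < y := by
  unfold ivlPiece at hy
  split_ifs at hy with h1 h2
  · omega
  · rw [h2]; exact hy.1
  · exact hy.1

lemma piece_lt_right (i : Fin N) (hi : i.val ≠ N - 1) {y : ℝ} (hy : y ∈ ivlPiece N c i) :
    y < c (i.val + 1) := by
  unfold ivlPiece at hy
  split_ifs at hy with h1
  · have h3 : (i : ℕ) + 1 = 1 := by rw [h1]
    rw [h3]; exact hy.2
  · exact hy.2

include hN hc in
lemma piece_subset_X (i : Fin N) : ivlPiece N c i ⊆ Set.Icc (c 0) (c N) := by
  intro y hy
  have h := piece_sub_Icc hN i hy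
  have hi := i.isLt
  exact ⟨le_trans (c_mono hc 0 i.val (by omega) (by omega)) h.1,
    le_trans h.2 (c_mono hc (i.val + 1) N (by omega) le_rfl)⟩

include hN hc in
lemma piece_disjoint {i j : Fin N} (hij : i ≠ j) :
    Disjoint (ivlPiece N c i) (ivlPiece N c j) := by
  rw [Set.disjoint_left]
  intro y hyi hyj
  rcases lt_or_gt_of_ne (fun h => hij (Fin.ext h) : i.val ≠ j.val) with h | h
  · have h1 : y < c (i.val + 1) := by
      rcases eq_or_ne i.val (N-1) with he | he
      · exfalso; omega
      · exact piece_lt_right i he hyi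
    have h2 : c j.val < y := piece_lt_left j (by omega) hyj
    have : c (i.val + 1) ≤ c j.val := c_mono hc _ _ (by omega) (by omega)
    linarith
  · have h1 : y < c (j.val + 1) := by
      rcases eq_or_ne j.val (N-1) with he | he
      · exfalso; omega
      · exact piece_lt_right j he hyj
    have h2 : c i.val < y := piece_lt_left i (by omega) hyi
    have : c (j.val + 1) ≤ c i.val := c_mono hc _ _ (by omega) (by omega)
    linarith

include hN hc in
lemma closure_piece (i : Fin N) :
    closure (ivlPiece N c i) = Set.Icc (c i.val) (c (i.val + 1)) := by
  have hi := i.isLt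
  have hlt : c i.val < c (i.val + 1) := hc i.val hi
  unfold ivlPiece
  split_ifs with h1 h2
  · rw [h1]; rw [closure_Ico (by rw [h1] at hlt; exact hlt.ne)]
  · rw [h2]; have : N - 1 + 1 = N := by omega
    rw [this, closure_Ioc (by rw [h2, this] at hlt; exact hlt.ne)]
  · rw [closure_Ioo hlt.ne]

lemma piece_ordConnected (i : Fin N) : (ivlPiece N c i).OrdConnected := by
  unfold ivlPiece
  split_ifs
  · exact Set.ordConnected_Ico
  · exact Set.ordConnected_Ioc
  · exact Set.ordConnected_Ioo

end Basic

section Atom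
variable {N : ℕ} (hN : 2 ≤ N) {c : ℕ → ℝ} (hc : ∀ i : ℕ, i < N → c i < c (i + 1))
  {f : ℝ → ℝ} (hmap : Set.MapsTo f (Set.Icc (c 0) (c N)) (Set.Icc (c 0) (c N)))
  {g : Fin N → ℝ → ℝ}
  (hg : ∀ i : Fin N,
      ContinuousOn (g i) (closure (ivlPiece N c i)) ∧
      Set.EqOn (g i) f (ivlPiece N c i) ∧
      Set.InjOn (g i) (closure (ivlPiece N c i)) ∧
      ∀ j : Fin N, j ≠ i →
        Disjoint (g i '' closure (ivlPiece N c i)) (g j '' closure (ivlPiece N c j)))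

lemma atom_nil : ivlAtom N c f ([] : List (Fin N)) = Set.Icc (c 0) (c N) := rfl

lemma atom_concat (w : List (Fin N)) (i : Fin N) :
    ivlAtom N c f (w ++ [i]) =
      closure (f '' (ivlAtom N c f w ∩ ivlPiece N c i)) := by
  unfold ivlAtom
  rw [List.foldl_append]
  rfl

include hmap in
lemma atom_subset_X (w : List (Fin N)) : ivlAtom N c f w ⊆ Set.Icc (c 0) (c N) := by
  induction w using List.reverseRecOn with
  | nil => exact subset_rfl
  | append_singleton u a ih =>
    rw [atom_concat]
    apply closure_minimal _ isClosed_Icc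
    rintro z ⟨y, hy, rfl⟩
    exact hmap (ih hy.1)

lemma atom_isClosed (w : List (Fin N)) : IsClosed (ivlAtom N c f w) := by
  induction w using List.reverseRecOn with
  | nil => exact isClosed_Icc
  | append_singleton u a ih => rw [atom_concat]; exact isClosed_closure

include hmap in
lemma atom_isCompact (w : List (Fin N)) : IsCompact (ivlAtom N c f w) :=
  isCompact_Icc.of_isClosed_subset (atom_isClosed w) (atom_subset_X hmap w)

include hN hc hg in
lemma atom_ordConnected (w : List (Fin N)) : (ivlAtom N c f w).OrdConnected := by
  induction w using List.reverseRecOn with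
  | nil => exact Set.ordConnected_Icc
  | append_singleton u a ih =>
    rw [atom_concat]
    have hS : (ivlAtom N c f u ∩ ivlPiece N c a).OrdConnected :=
      ih.inter (piece_ordConnected a)
    have hpre : IsPreconnected (ivlAtom N c f u ∩ ivlPiece N c a) :=
      hS.isPreconnected
    have him : f '' (ivlAtom N c f u ∩ ivlPiece N c a)
        = g a '' (ivlAtom N c f u ∩ ivlPiece N c a) :=
      (Set.EqOn.image_eq (((hg a).2.1).mono Set.inter_subset_right)).symm
    rw [him]
    have : IsPreconnected (g a '' (ivlAtom N c f u ∩ ivlPiece N c a)) :=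
      hpre.image _ (((hg a).1).mono
        (Set.inter_subset_right.trans subset_closure))
    exact this.closure.ordConnected

include hmap in
lemma atom_sub_image (w : List (Fin N)) (i : Fin N)
    (hgi : ContinuousOn (g i) (closure (ivlPiece N c i)))
    (hgf : Set.EqOn (g i) f (ivlPiece N c i)) :
    ivlAtom N c f (w ++ [i]) ⊆
      g i '' closure (ivlAtom N c f w ∩ ivlPiece N c i) := by
  rw [atom_concat]
  have hsub : closure (ivlAtom N c f w ∩ ivlPiece N c i) ⊆ closure (ivlPiece N c i) :=
    closure_mono Set.inter_subset_right
  have hcpt : IsCompact (closure (ivlAtom N c f w ∩ ivlPiece N c i)) := by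
    have hsub2 : closure (ivlAtom N c f w ∩ ivlPiece N c i) ⊆ Set.Icc (c 0) (c N) :=
      closure_minimal (Set.inter_subset_left.trans (atom_subset_X hmap w)) isClosed_Icc
    exact isCompact_Icc.of_isClosed_subset isClosed_closure hsub2
  have himcpt : IsCompact (g i '' closure (ivlAtom N c f w ∩ ivlPiece N c i)) :=
    hcpt.image_of_continuousOn (hgi.mono hsub)
  apply closure_minimal _ himcpt.isClosed
  rintro z ⟨y, hy, rfl⟩
  exact ⟨y, subset_closure hy, hgf hy.2⟩

include hN hc hmap hg in
lemma atom_disjoint : ∀ (w w' : List (Fin N)), w.length = w'.length → w ≠ w' →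
    Disjoint (ivlAtom N c f w) (ivlAtom N c f w') := by
  intro w
  induction w using List.reverseRecOn with
  | nil =>
    intro w' hl hne
    exact absurd (List.eq_nil_of_length_eq_zero hl.symm).symm hne
  | append_singleton u a ih =>
    intro w' hl hne
    rcases List.eq_nil_or_concat w' with rfl | ⟨v, b, rfl⟩
    · simp at hl
    · rw [List.concat_eq_append] at hl hne ⊢
      rcases eq_or_ne a b with rfl | hab
      · have huv : u ≠ v := by
          intro h; exact hne (by rw [h])
        have hluv : u.length = v.length := by
          simpa using hl
        have hdis := ih v hluv huv
        have h1 := atom_sub_image hmap u a (hg a).1 (hg a).2.1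
        have h2 := atom_sub_image hmap v a (hg a).1 (hg a).2.1
        rw [Set.disjoint_left]
        intro z hz1 hz2
        obtain ⟨y1, hy1, he1⟩ := h1 hz1
        obtain ⟨y2, hy2, he2⟩ := h2 hz2
        have hy1' : y1 ∈ closure (ivlPiece N c a) :=
          closure_mono Set.inter_subset_right hy1
        have hy2' : y2 ∈ closure (ivlPiece N c a) :=
          closure_mono Set.inter_subset_right hy2
        have : y1 = y2 := (hg a).2.2.1 hy1' hy2' (he1.trans he2.symm)
        subst this
        have hm1 : y1 ∈ ivlAtom N c f u := by
          have h := closure_mono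
            (Set.inter_subset_left (s := ivlAtom N c f u) (t := ivlPiece N c a)) hy1
          rwa [(atom_isClosed u).closure_eq] at h
        have hm2 : y1 ∈ ivlAtom N c f v := by
          have h := closure_mono
            (Set.inter_subset_left (s := ivlAtom N c f v) (t := ivlPiece N c a)) hy2
          rwa [(atom_isClosed v).closure_eq] at h
        exact Set.disjoint_left.mp hdis hm1 hm2
      · have h1 := atom_sub_image hmap u a (hg a).1 (hg a).2.1
        have h2 := atom_sub_image hmap v b (hg b).1 (hg b).2.1
        have hdis := (hg b).2.2.2 a hab
        exact hdis.symm.mono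
          (h1.trans (Set.image_mono (closure_mono Set.inter_subset_right)))
          (h2.trans (Set.image_mono (closure_mono Set.inter_subset_right)))

end Atom

lemma itinWord_length {N : ℕ} (θ : ℕ → Fin N) (t n : ℕ) :
    (itinWord θ t n).length = n := by
  simp [itinWord]

lemma itinWord_succ {N : ℕ} (θ : ℕ → Fin N) (t n : ℕ) :
    itinWord θ t (n + 1) = itinWord θ t n ++ [θ (t + n)] := by
  simp [itinWord, List.range_succ]

lemma itinWord_cons {N : ℕ} (θ : ℕ → Fin N) (t n : ℕ) :
    itinWord θ t (n + 1) = θ t :: itinWord θ (t + 1) n := by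
  simp only [itinWord, List.range_succ_eq_map, List.map_cons, List.map_map,
    Nat.add_zero, Function.comp_def]
  congr 1
  apply List.map_congr_left
  intro k _
  congr 1
  omega

section Orbit
variable {N : ℕ} (hN : 2 ≤ N) {c : ℕ → ℝ} (hc : ∀ i : ℕ, i < N → c i < c (i + 1))
  {f : ℝ → ℝ} (hmap : Set.MapsTo f (Set.Icc (c 0) (c N)) (Set.Icc (c 0) (c N)))
  {x : ℝ} {θ : ℕ → Fin N} (hθ : ∀ t : ℕ, f^[t] x ∈ ivlPiece N c (θ t))
  {g : Fin N → ℝ → ℝ}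
  (hg : ∀ i : Fin N,
      ContinuousOn (g i) (closure (ivlPiece N c i)) ∧
      Set.EqOn (g i) f (ivlPiece N c i) ∧
      Set.InjOn (g i) (closure (ivlPiece N c i)) ∧
      ∀ j : Fin N, j ≠ i →
        Disjoint (g i '' closure (ivlPiece N c i)) (g j '' closure (ivlPiece N c j)))

include hN hc hθ in
lemma orbit_mem_X (t : ℕ) : f^[t] x ∈ Set.Icc (c 0) (c N) :=
  piece_subset_X hN hc (θ t) (hθ t)

include hN hc hθ in
lemma orbit_mem_atom (t n : ℕ) :
    f^[t + n] x ∈ ivlAtom N c f (itinWord θ t n) := by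
  induction n with
  | zero => exact orbit_mem_X hN hc hθ t
  | succ n ih =>
    rw [itinWord_succ, atom_concat]
    have : f^[t + (n + 1)] x = f (f^[t + n] x) := by
      rw [← Nat.add_assoc, Function.iterate_succ_apply']
    rw [this]
    exact subset_closure ⟨f^[t + n] x, ⟨ih, hθ (t + n)⟩, rfl⟩

include hN hc hmap hθ hg in
lemma history_eq (t n : ℕ) (w : List (Fin N)) (hw : w.length = n)
    (hmem : f^[t + n] x ∈ ivlAtom N c f w) : w = itinWord θ t n := by
  by_contra hne
  have hdis := atom_disjoint hN hc hmap hg w (itinWord θ t n)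
    (by rw [hw, itinWord_length]) hne
  exact Set.disjoint_left.mp hdis hmem (orbit_mem_atom hN hc hθ t n)

end Orbit

section Diam
variable {N : ℕ} (hN : 2 ≤ N) {c : ℕ → ℝ} (hc : ∀ i : ℕ, i < N → c i < c (i + 1))
  {f : ℝ → ℝ} (hmap : Set.MapsTo f (Set.Icc (c 0) (c N)) (Set.Icc (c 0) (c N)))
  {lam : ℝ} (hlam : lam ∈ Set.Ioo (0 : ℝ) 1)
  (hcontr : ∀ i : Fin N, ∀ x ∈ ivlPiece N c i, ∀ y ∈ ivlPiece N c i,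
      |f x - f y| ≤ lam * |x - y|)

include hN hc hmap hlam hcontr in
lemma atom_diam (w : List (Fin N)) :
    Metric.diam (ivlAtom N c f w) ≤ lam ^ w.length * (c N - c 0) := by
  have hD : (0:ℝ) ≤ c N - c 0 := by
    have := c_mono hc 0 N (by omega) le_rfl; linarith
  induction w using List.reverseRecOn with
  | nil =>
    simp only [atom_nil, List.length_nil, pow_zero, one_mul]
    rw [Real.diam_Icc (by linarith)]
  | append_singleton u a ih =>
    rw [atom_concat, Metric.diam_closure]
    have hbA : Bornology.IsBounded (ivlAtom N c f u) :=
      (Metric.isBounded_Icc (c 0) (c N)).subset (atom_subset_X hmap u)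
    have hbS : Bornology.IsBounded (ivlAtom N c f u ∩ ivlPiece N c a) :=
      hbA.subset Set.inter_subset_left
    have hnn : (0:ℝ) ≤ lam ^ (u ++ [a]).length * (c N - c 0) :=
      mul_nonneg (pow_nonneg hlam.1.le _) hD
    apply Metric.diam_le_of_forall_dist_le hnn
    rintro u' ⟨p, hp, rfl⟩ v' ⟨q, hq, rfl⟩
    have h1 : dist (f p) (f q) ≤ lam * dist p q := by
      rw [Real.dist_eq, Real.dist_eq]
      exact hcontr a p hp.2 q hq.2
    have h2 : dist p q ≤ Metric.diam (ivlAtom N c f u) :=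
      Metric.dist_le_diam_of_mem hbA hp.1 hq.1
    have h3 : lam * dist p q ≤ lam * (lam ^ u.length * (c N - c 0)) :=
      mul_le_mul_of_nonneg_left (h2.trans ih) hlam.1.le
    calc dist (f p) (f q) ≤ lam * (lam ^ u.length * (c N - c 0)) := h1.trans h3
      _ = lam ^ (u ++ [a]).length * (c N - c 0) := by
          simp [pow_succ]; ring

include hN hc hmap hlam hcontr in
lemma exists_small : ∃ n₂ : ℕ, 1 ≤ n₂ ∧ ∀ n, n₂ ≤ n → ∀ w : List (Fin N),
    w.length = n → ∀ u ∈ ivlAtom N c f w, ∀ v ∈ ivlAtom N c f w,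
    ∀ i : ℕ, i < N → dist u v < c (i + 1) - c i := by
  classical
  have hD : (0:ℝ) < c N - c 0 := by
    have := c_strictmono hc 0 N (by omega) le_rfl; linarith
  set gaps : Finset ℝ := (Finset.range N).image (fun i => c (i + 1) - c i) with hgaps
  have hne : gaps.Nonempty := ⟨c 1 - c 0, by
    simp [hgaps]; exact ⟨0, by omega, rfl⟩⟩
  set δ := gaps.min' hne with hδdef
  have hδpos : 0 < δ := by
    rw [hδdef, Finset.lt_min'_iff]
    intro b hb
    simp only [hgaps, Finset.mem_image, Finset.mem_range] at hb
    obtain ⟨i, hi, he⟩ := hb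
    have := hc i hi; linarith
  obtain ⟨n₂, hn₂⟩ := exists_pow_lt_of_lt_one (div_pos hδpos hD) hlam.2
  refine ⟨max n₂ 1, le_max_right _ _, ?_⟩
  intro n hn w hw u hu v hv i hi
  have h1 : dist u v ≤ lam ^ n * (c N - c 0) := by
    have := Metric.dist_le_diam_of_mem
      ((Metric.isBounded_Icc (c 0) (c N)).subset (atom_subset_X hmap w)) hu hv
    calc dist u v ≤ Metric.diam (ivlAtom N c f w) := this
      _ ≤ lam ^ w.length * (c N - c 0) := atom_diam hN hc hmap hlam hcontr w
      _ = lam ^ n * (c N - c 0) := by rw [hw]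
  have h2 : lam ^ n ≤ lam ^ n₂ :=
    pow_le_pow_of_le_one hlam.1.le hlam.2.le (le_trans (le_max_left _ _) hn)
  have h3 : lam ^ n * (c N - c 0) < δ := by
    calc lam ^ n * (c N - c 0) ≤ lam ^ n₂ * (c N - c 0) :=
          mul_le_mul_of_nonneg_right h2 hD.le
      _ < (δ / (c N - c 0)) * (c N - c 0) := by
          exact mul_lt_mul_of_pos_right hn₂ hD
      _ = δ := by field_simp
  have h4 : δ ≤ c (i + 1) - c i := by
    apply Finset.min'_le
    rw [hgaps]
    simp only [Finset.mem_image, Finset.mem_range]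
    exact ⟨i, hi, rfl⟩
  linarith

end Diam

def extSet {N : ℕ} (θ : ℕ → Fin N) (n : ℕ) (w : List (Fin N)) : Set (Fin N) :=
  {a | w ++ [a] ∈ seqFactors θ (n + 1)}

def DsetIdx (N : ℕ) (c : ℕ → ℝ) (f : ℝ → ℝ) (x : ℝ) (n : ℕ) (w : List (Fin N)) :
    Set (Fin N) :=
  {j | 0 < j.val ∧ c j.val ∈ ivlAtom N c f w ∧
    (∃ t : ℕ, f^[t + n] x ∈ ivlAtom N c f w ∩
      ivlPiece N c ⟨j.val - 1, lt_of_le_of_lt (Nat.sub_le _ _) j.isLt⟩) ∧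
    (∃ t : ℕ, f^[t + n] x ∈ ivlAtom N c f w ∩ ivlPiece N c j)}

lemma factors_finite {N : ℕ} (θ : ℕ → Fin N) (n : ℕ) : (seqFactors θ n).Finite := by
  apply Set.Finite.subset (List.finite_length_eq (α := Fin N) (n := n))
  rintro w ⟨t, rfl⟩
  exact itinWord_length θ t n

lemma factors_length {N : ℕ} {θ : ℕ → Fin N} {n : ℕ} {w : List (Fin N)}
    (hw : w ∈ seqFactors θ n) : w.length = n := by
  obtain ⟨t, rfl⟩ := hw; exact itinWord_length θ t n

lemma mem_extSet_iff {N : ℕ} {θ : ℕ → Fin N} {n : ℕ} {w : List (Fin N)}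
    (hw : w ∈ seqFactors θ n) {a : Fin N} :
    a ∈ extSet θ n w ↔ ∃ t, itinWord θ t n = w ∧ θ (t + n) = a := by
  constructor
  · rintro ⟨t, ht⟩
    rw [itinWord_succ] at ht
    have hl : w.length = (itinWord θ t n).length := by
      rw [factors_length hw, itinWord_length]
    obtain ⟨h1, h2⟩ := List.append_inj ht hl
    exact ⟨t, h1.symm, by simpa using h2.symm⟩
  · rintro ⟨t, h1, h2⟩
    exact ⟨t, by rw [itinWord_succ, h1, h2]⟩

section Count
variable {N : ℕ} (hN : 2 ≤ N) {c : ℕ → ℝ} (hc : ∀ i : ℕ, i < N → c i < c (i + 1))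
  {f : ℝ → ℝ} (hmap : Set.MapsTo f (Set.Icc (c 0) (c N)) (Set.Icc (c 0) (c N)))
  {x : ℝ} {θ : ℕ → Fin N} (hθ : ∀ t : ℕ, f^[t] x ∈ ivlPiece N c (θ t))
  {g : Fin N → ℝ → ℝ}
  (hg : ∀ i : Fin N,
      ContinuousOn (g i) (closure (ivlPiece N c i)) ∧
      Set.EqOn (g i) f (ivlPiece N c i) ∧
      Set.InjOn (g i) (closure (ivlPiece N c i)) ∧
      ∀ j : Fin N, j ≠ i →
        Disjoint (g i '' closure (ivlPiece N c i)) (g j '' closure (ivlPiece N c j)))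

include hN hc hmap hθ hg in
lemma mem_extSet_dyn {n : ℕ} {w : List (Fin N)} (hw : w ∈ seqFactors θ n) {a : Fin N} :
    a ∈ extSet θ n w ↔ ∃ t, f^[t + n] x ∈ ivlAtom N c f w ∩ ivlPiece N c a := by
  rw [mem_extSet_iff hw]
  constructor
  · rintro ⟨t, h1, h2⟩
    refine ⟨t, ?_, ?_⟩
    · rw [← h1]; exact orbit_mem_atom hN hc hθ t n
    · rw [← h2]; exact hθ (t + n)
  · rintro ⟨t, hmem, hpc⟩
    have hist : w = itinWord θ t n := history_eq hN hc hmap hθ hg t n w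
      (factors_length hw) hmem
    refine ⟨t, hist.symm, ?_⟩
    by_contra hne
    exact Set.disjoint_left.mp (piece_disjoint hN hc hne) (hθ (t + n)) hpc

lemma extSet_nonempty {n : ℕ} {w : List (Fin N)} (hw : w ∈ seqFactors θ n) :
    (extSet θ n w).Nonempty := by
  obtain ⟨t, rfl⟩ := hw
  exact ⟨θ (t + n), (mem_extSet_iff ⟨t, rfl⟩).mpr ⟨t, rfl, rfl⟩⟩

include hN hc hmap hθ hg in
lemma ext_c_mem_atom {n : ℕ} {w : List (Fin N)} (hw : w ∈ seqFactors θ n)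
    {m j : Fin N} (hm : m ∈ extSet θ n w) (hj : j ∈ extSet θ n w) (hmj : m < j) :
    c j.val ∈ ivlAtom N c f w := by
  obtain ⟨t1, hu⟩ := (mem_extSet_dyn hN hc hmap hθ hg hw).mp hm
  obtain ⟨t2, hv⟩ := (mem_extSet_dyn hN hc hmap hθ hg hw).mp hj
  have hmval : m.val < j.val := hmj
  have h1 : f^[t1 + n] x < c (m.val + 1) :=
    piece_lt_right m (by have := j.isLt; omega) hu.2
  have h2 : c (m.val + 1) ≤ c j.val := c_mono hc _ _ (by omega) (le_of_lt j.isLt)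
  have h3 : c j.val < f^[t2 + n] x := piece_lt_left j (by omega) hv.2
  exact (atom_ordConnected hN hc hg w).out hu.1 hv.1 ⟨by linarith, h3.le⟩

include hN hc hmap hθ hg in
lemma DsetIdx_subset {n : ℕ} {w : List (Fin N)} (hw : w ∈ seqFactors θ n)
    {m : Fin N} (hmin : ∀ a ∈ extSet θ n w, m ≤ a) :
    DsetIdx N c f x n w ⊆ extSet θ n w \ {m} := by
  rintro j ⟨hj0, _, ⟨t1, hL⟩, ⟨t2, hR⟩⟩
  have hjE : j ∈ extSet θ n w := (mem_extSet_dyn hN hc hmap hθ hg hw).mpr ⟨t2, hR⟩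
  have hj1E : (⟨j.val - 1, lt_of_le_of_lt (Nat.sub_le _ _) j.isLt⟩ : Fin N)
      ∈ extSet θ n w := (mem_extSet_dyn hN hc hmap hθ hg hw).mpr ⟨t1, hL⟩
  refine ⟨hjE, ?_⟩
  intro hjm
  rw [Set.mem_singleton_iff] at hjm
  have h1 : m.val ≤ j.val - 1 := hmin _ hj1E
  have h2 : j.val = m.val := by rw [hjm]
  omega

include hN hc hmap hθ hg in
lemma subset_delta_atom {n : ℕ} {w : List (Fin N)} (hw : w ∈ seqFactors θ n)
    {m : Fin N} (hmE : m ∈ extSet θ n w) (hmin : ∀ a ∈ extSet θ n w, m ≤ a) :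
    Set.MapsTo (fun j : Fin N => c j.val) (extSet θ n w \ {m})
      (ivlDelta N c ∩ ivlAtom N c f w) := by
  rintro j ⟨hjE, hjm⟩
  have hmj : m < j := lt_of_le_of_ne (hmin j hjE) (Ne.symm hjm)
  refine ⟨⟨j.val, ?_, j.isLt, rfl⟩, ext_c_mem_atom hN hc hmap hθ hg hw hmE hjE hmj⟩
  have : m.val < j.val := hmj
  omega

include hN hc hmap hθ hg in
lemma subset_DsetIdx {n : ℕ} {w : List (Fin N)} (hw : w ∈ seqFactors θ n)
    {m : Fin N} (hmE : m ∈ extSet θ n w) (hmin : ∀ a ∈ extSet θ n w, m ≤ a)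
    (hsmall : ∀ u ∈ ivlAtom N c f w, ∀ v ∈ ivlAtom N c f w,
      ∀ i : ℕ, i < N → dist u v < c (i + 1) - c i) :
    extSet θ n w \ {m} ⊆ DsetIdx N c f x n w := by
  rintro j ⟨hjE, hjm⟩
  rw [Set.mem_singleton_iff] at hjm
  have hmj : m < j := lt_of_le_of_ne (hmin j hjE) (Ne.symm hjm)
  have hmval : m.val < j.val := hmj
  obtain ⟨t1, hu⟩ := (mem_extSet_dyn hN hc hmap hθ hg hw).mp hmE
  obtain ⟨t2, hv⟩ := (mem_extSet_dyn hN hc hmap hθ hg hw).mp hjE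
  have hkey : j.val - 1 = m.val := by
    by_contra hne
    have hlt : m.val + 2 ≤ j.val := by omega
    have h1 : f^[t1 + n] x < c (m.val + 1) :=
      piece_lt_right m (by have := j.isLt; omega) hu.2
    have h2 : c (m.val + 1 + 1) ≤ c j.val := c_mono hc _ _ (by omega) (le_of_lt j.isLt)
    have h3 : c j.val < f^[t2 + n] x := piece_lt_left j (by omega) hv.2
    have h4 := hsmall _ hu.1 _ hv.1 (m.val + 1) (by have := j.isLt; omega)
    have h5 : f^[t2 + n] x - f^[t1 + n] x ≤ dist (f^[t1 + n] x) (f^[t2 + n] x) := by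
      rw [Real.dist_eq, abs_sub_comm]
      exact le_abs_self _
    linarith
  refine ⟨by omega, ext_c_mem_atom hN hc hmap hθ hg hw hmE hjE hmj, ⟨t1, ?_⟩, ⟨t2, hv⟩⟩
  have : (⟨j.val - 1, lt_of_le_of_lt (Nat.sub_le _ _) j.isLt⟩ : Fin N) = m :=
    Fin.ext hkey
  rw [this]
  exact hu

end Count

lemma delta_finite {N : ℕ} {c : ℕ → ℝ} : (ivlDelta N c).Finite := by
  apply Set.Finite.subset ((Set.finite_Icc 1 N).image c)
  rintro y ⟨i, h1, h2, rfl⟩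
  exact ⟨i, ⟨h1, h2.le⟩, rfl⟩

lemma LRn_subset_delta {N : ℕ} {c : ℕ → ℝ} {f : ℝ → ℝ} {x : ℝ} {n : ℕ} :
    ivlDeltaLRn N c f n x ⊆ ivlDelta N c := by
  rintro y ⟨i, h1, h2, hy, -⟩
  exact ⟨i, h1, h2, hy⟩

section Count2
variable {N : ℕ} {c : ℕ → ℝ} {f : ℝ → ℝ} {x : ℝ} {θ : ℕ → Fin N}

lemma complexity_succ (n : ℕ) :
    seqComplexity θ (n + 1) =
      ∑ w ∈ (factors_finite θ n).toFinset, (extSet θ n w).ncard := by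
  classical
  have hrep : (factors_finite θ (n + 1)).toFinset =
      (factors_finite θ n).toFinset.biUnion
        (fun w => ((Set.toFinite (extSet θ n w)).toFinset).image
          (fun a => w ++ [a])) := by
    ext u
    simp only [Set.Finite.mem_toFinset, Finset.mem_biUnion, Finset.mem_image]
    constructor
    · rintro ⟨t, rfl⟩
      refine ⟨itinWord θ t n, ⟨t, rfl⟩, θ (t + n), ?_, (itinWord_succ θ t n).symm⟩
      exact ⟨t, (itinWord_succ θ t n).symm⟩
    · rintro ⟨w, ⟨t, rfl⟩, a, ha, rfl⟩
      exact ha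
  have hcompl : seqComplexity θ (n + 1) = (factors_finite θ (n + 1)).toFinset.card :=
    Set.ncard_eq_toFinset_card _ _
  rw [hcompl, hrep, Finset.card_biUnion]
  · apply Finset.sum_congr rfl
    intro w _
    have hinj : Function.Injective (fun a : Fin N => w ++ [a]) := by
      intro a b hab
      simpa using List.append_cancel_left hab
    rw [Finset.card_image_of_injective _ hinj]
    exact (Set.ncard_eq_toFinset_card _ _).symm
  · intro w hw w' hw' hne
    simp only [Function.onFun]
    rw [Finset.disjoint_left]
    rintro u hu hu'
    simp only [Finset.mem_image] at hu hu'
    obtain ⟨a, _, rfl⟩ := hu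
    obtain ⟨b, _, heq⟩ := hu'
    apply hne
    rw [Finset.mem_coe, Set.Finite.mem_toFinset] at hw hw'
    exact List.append_inj_left heq.symm
      (by rw [factors_length hw, factors_length hw'])

end Count2

section Count3
variable {N : ℕ} (hN : 2 ≤ N) {c : ℕ → ℝ} (hc : ∀ i : ℕ, i < N → c i < c (i + 1))
  {f : ℝ → ℝ} (hmap : Set.MapsTo f (Set.Icc (c 0) (c N)) (Set.Icc (c 0) (c N)))
  {x : ℝ} {θ : ℕ → Fin N} (hθ : ∀ t : ℕ, f^[t] x ∈ ivlPiece N c (θ t))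
  {g : Fin N → ℝ → ℝ}
  (hg : ∀ i : Fin N,
      ContinuousOn (g i) (closure (ivlPiece N c i)) ∧
      Set.EqOn (g i) f (ivlPiece N c i) ∧
      Set.InjOn (g i) (closure (ivlPiece N c i)) ∧
      ∀ j : Fin N, j ≠ i →
        Disjoint (g i '' closure (ivlPiece N c i)) (g j '' closure (ivlPiece N c j)))

include hc in
lemma c_inj_fin {j j' : Fin N} (h : c j.val = c j'.val) : j = j' := by
  rcases lt_trichotomy j.val j'.val with hlt | he | hlt
  · exact absurd h (ne_of_lt (c_strictmono hc _ _ hlt (le_of_lt j'.isLt)))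
  · exact Fin.ext he
  · exact absurd h.symm (ne_of_lt (c_strictmono hc _ _ hlt (le_of_lt j.isLt)))

include hN hc hmap hθ hg in
lemma LRn_card (n : ℕ) :
    (ivlDeltaLRn N c f n x).ncard =
      ∑ w ∈ (factors_finite θ n).toFinset, (DsetIdx N c f x n w).ncard := by
  classical
  set T := (factors_finite θ n).toFinset.biUnion
    (fun w => (Set.toFinite (DsetIdx N c f x n w)).toFinset.image
      (fun j : Fin N => c j.val)) with hT
  have hset : ivlDeltaLRn N c f n x = ↑T := by
    ext y
    simp only [hT, Finset.coe_biUnion, Set.mem_iUnion, Finset.mem_coe,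
      Finset.mem_image, Set.Finite.mem_toFinset]
    constructor
    · rintro ⟨i, h1, h2, rfl, w, hwlen, hcmem, ⟨t1, hL⟩, ⟨t2, hR⟩⟩
      have hw : w ∈ seqFactors θ n :=
        ⟨t1, history_eq hN hc hmap hθ hg t1 n w hwlen hL.1⟩
      refine ⟨w, hw, ⟨⟨i, h2⟩, ⟨h1, hcmem, ⟨t1, hL⟩, ⟨t2, hR⟩⟩, rfl⟩⟩
    · rintro ⟨w, hw, j, hj, rfl⟩
      exact ⟨j.val, hj.1, j.isLt, rfl, w, factors_length hw, hj.2.1,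
        hj.2.2.1, hj.2.2.2⟩
  rw [hset, Set.ncard_coe_finset, hT, Finset.card_biUnion]
  · apply Finset.sum_congr rfl
    intro w _
    rw [Finset.card_image_of_injOn (fun j _ j' _ h => c_inj_fin hc h)]
    exact (Set.ncard_eq_toFinset_card _ _).symm
  · intro w hw w' hw' hne
    simp only [Function.onFun]
    rw [Finset.disjoint_left]
    rintro y hy hy'
    simp only [Finset.mem_image, Set.Finite.mem_toFinset] at hy hy'
    obtain ⟨j, hj, rfl⟩ := hy
    obtain ⟨j', hj', heq⟩ := hy'
    rw [Finset.mem_coe, Set.Finite.mem_toFinset] at hw hw'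
    have hdis := atom_disjoint hN hc hmap hg w w'
      (by rw [factors_length hw, factors_length hw']) hne
    exact Set.disjoint_left.mp hdis hj.2.1 (heq ▸ hj'.2.1)

include hN hc hmap hg in
lemma delta_atom_sum {n : ℕ} (hθ' : True) :
    ∑ w ∈ (factors_finite θ n).toFinset, (ivlDelta N c ∩ ivlAtom N c f w).ncard ≤
      (ivlDelta N c).ncard := by
  classical
  set U := (factors_finite θ n).toFinset.biUnion
    (fun w => (delta_finite.inter_of_left (ivlAtom N c f w)).toFinset) with hU
  have hcard : U.card = ∑ w ∈ (factors_finite θ n).toFinset,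
      (ivlDelta N c ∩ ivlAtom N c f w).ncard := by
    rw [hU, Finset.card_biUnion]
    · exact Finset.sum_congr rfl fun w _ => (Set.ncard_eq_toFinset_card _ _).symm
    · intro w hw w' hw' hne
      simp only [Function.onFun]
      rw [Finset.disjoint_left]
      rintro y hy hy'
      rw [Finset.mem_coe] at hw hw'
      rw [Set.Finite.mem_toFinset] at hy hy' hw hw'
      have hdis := atom_disjoint hN hc hmap hg w w'
        (by rw [factors_length hw, factors_length hw']) hne
      exact Set.disjoint_left.mp hdis hy.2 hy'.2
  have hsub : ↑U ⊆ ivlDelta N c := by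
    intro y hy
    rw [hU] at hy
    simp only [Finset.coe_biUnion, Set.mem_iUnion, Finset.mem_coe,
      Set.Finite.mem_toFinset] at hy
    obtain ⟨w, _, hy⟩ := hy
    exact hy.1
  calc ∑ w ∈ (factors_finite θ n).toFinset,
        (ivlDelta N c ∩ ivlAtom N c f w).ncard = U.card := hcard.symm
    _ = (↑U : Set ℝ).ncard := (Set.ncard_coe_finset _).symm
    _ ≤ (ivlDelta N c).ncard := Set.ncard_le_ncard hsub delta_finite

end Count3

section Count4
variable {N : ℕ} (hN : 2 ≤ N) {c : ℕ → ℝ} (hc : ∀ i : ℕ, i < N → c i < c (i + 1))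
  {f : ℝ → ℝ} (hmap : Set.MapsTo f (Set.Icc (c 0) (c N)) (Set.Icc (c 0) (c N)))
  {x : ℝ} {θ : ℕ → Fin N} (hθ : ∀ t : ℕ, f^[t] x ∈ ivlPiece N c (θ t))
  {g : Fin N → ℝ → ℝ}
  (hg : ∀ i : Fin N,
      ContinuousOn (g i) (closure (ivlPiece N c i)) ∧
      Set.EqOn (g i) f (ivlPiece N c i) ∧
      Set.InjOn (g i) (closure (ivlPiece N c i)) ∧
      ∀ j : Fin N, j ≠ i →
        Disjoint (g i '' closure (ivlPiece N c i)) (g j '' closure (ivlPiece N c j)))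

include hN hc hmap hθ hg in
lemma ext_min_exists {n : ℕ} {w : List (Fin N)} (hw : w ∈ seqFactors θ n) :
    ∃ m ∈ extSet θ n w, ∀ a ∈ extSet θ n w, m ≤ a := by
  classical
  have hne : ((Set.toFinite (extSet θ n w)).toFinset).Nonempty := by
    obtain ⟨a, ha⟩ := extSet_nonempty hw
    exact ⟨a, (Set.Finite.mem_toFinset _).mpr ha⟩
  refine ⟨(Set.toFinite (extSet θ n w)).toFinset.min' hne, ?_, ?_⟩
  · have := Finset.min'_mem _ hne
    rwa [Set.Finite.mem_toFinset] at this
  · intro a ha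
    exact Finset.min'_le _ a ((Set.Finite.mem_toFinset _).mpr ha)

include hN hc hmap hθ hg in
lemma step_lower (n : ℕ) :
    (ivlDeltaLRn N c f n x).ncard + seqComplexity θ n ≤ seqComplexity θ (n + 1) := by
  classical
  rw [complexity_succ, LRn_card hN hc hmap hθ hg]
  have hpn : seqComplexity θ n = ∑ w ∈ (factors_finite θ n).toFinset, 1 := by
    rw [Finset.sum_const, smul_eq_mul, mul_one]
    exact Set.ncard_eq_toFinset_card _ _
  rw [hpn, ← Finset.sum_add_distrib]
  apply Finset.sum_le_sum
  intro w hw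
  rw [Set.Finite.mem_toFinset] at hw
  obtain ⟨m, hmE, hmin⟩ := ext_min_exists hN hc hmap hθ hg hw
  have hsub := DsetIdx_subset hN hc hmap hθ hg hw hmin
  have h1 : (DsetIdx N c f x n w).ncard ≤ (extSet θ n w \ {m}).ncard :=
    Set.ncard_le_ncard hsub (Set.toFinite _)
  have h2 : (extSet θ n w \ {m}).ncard + 1 = (extSet θ n w).ncard :=
    Set.ncard_diff_singleton_add_one hmE (Set.toFinite _)
  omega

include hN hc hmap hθ hg in
lemma step_upper (n : ℕ) :
    seqComplexity θ (n + 1) ≤ seqComplexity θ n + (ivlDelta N c).ncard := by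
  classical
  rw [complexity_succ]
  have hpn : seqComplexity θ n = ∑ w ∈ (factors_finite θ n).toFinset, 1 := by
    rw [Finset.sum_const, smul_eq_mul, mul_one]
    exact Set.ncard_eq_toFinset_card _ _
  have hle : ∑ w ∈ (factors_finite θ n).toFinset, (extSet θ n w).ncard ≤
      ∑ w ∈ (factors_finite θ n).toFinset,
        (1 + (ivlDelta N c ∩ ivlAtom N c f w).ncard) := by
    apply Finset.sum_le_sum
    intro w hw
    rw [Set.Finite.mem_toFinset] at hw
    obtain ⟨m, hmE, hmin⟩ := ext_min_exists hN hc hmap hθ hg hw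
    have h2 : (extSet θ n w \ {m}).ncard + 1 = (extSet θ n w).ncard :=
      Set.ncard_diff_singleton_add_one hmE (Set.toFinite _)
    have h3 : (extSet θ n w \ {m}).ncard ≤
        (ivlDelta N c ∩ ivlAtom N c f w).ncard :=
      Set.ncard_le_ncard_of_injOn (fun j : Fin N => c j.val)
        (subset_delta_atom hN hc hmap hθ hg hw hmE hmin)
        (fun j _ j' _ h => c_inj_fin hc h)
        (delta_finite.inter_of_left _)
    omega
  calc ∑ w ∈ (factors_finite θ n).toFinset, (extSet θ n w).ncard
      ≤ ∑ w ∈ (factors_finite θ n).toFinset,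
        (1 + (ivlDelta N c ∩ ivlAtom N c f w).ncard) := hle
    _ = ∑ w ∈ (factors_finite θ n).toFinset, 1 +
        ∑ w ∈ (factors_finite θ n).toFinset,
          (ivlDelta N c ∩ ivlAtom N c f w).ncard := Finset.sum_add_distrib
    _ ≤ seqComplexity θ n + (ivlDelta N c).ncard := by
        rw [← hpn]
        exact Nat.add_le_add le_rfl (delta_atom_sum hN hc hmap hg trivial)

include hN hc hmap hθ hg in
lemma step_eq_small (n : ℕ)
    (hsmall : ∀ w : List (Fin N), w.length = n →
      ∀ u ∈ ivlAtom N c f w, ∀ v ∈ ivlAtom N c f w,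
      ∀ i : ℕ, i < N → dist u v < c (i + 1) - c i) :
    seqComplexity θ (n + 1) = seqComplexity θ n + (ivlDeltaLRn N c f n x).ncard := by
  classical
  refine le_antisymm ?_ (by have := step_lower hN hc hmap hθ hg (x := x) n; omega)
  rw [complexity_succ, LRn_card hN hc hmap hθ hg]
  have hpn : seqComplexity θ n = ∑ w ∈ (factors_finite θ n).toFinset, 1 := by
    rw [Finset.sum_const, smul_eq_mul, mul_one]
    exact Set.ncard_eq_toFinset_card _ _
  rw [hpn, ← Finset.sum_add_distrib]
  apply Finset.sum_le_sum
  intro w hw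
  rw [Set.Finite.mem_toFinset] at hw
  obtain ⟨m, hmE, hmin⟩ := ext_min_exists hN hc hmap hθ hg hw
  have h2 : (extSet θ n w \ {m}).ncard + 1 = (extSet θ n w).ncard :=
    Set.ncard_diff_singleton_add_one hmE (Set.toFinite _)
  have h3 : (extSet θ n w \ {m}).ncard ≤ (DsetIdx N c f x n w).ncard :=
    Set.ncard_le_ncard
      (subset_DsetIdx hN hc hmap hθ hg hw hmE hmin (hsmall w (factors_length hw)))
      (Set.toFinite _)
  omega

end Count4

section Mono
variable {N : ℕ} {c : ℕ → ℝ} {f : ℝ → ℝ}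
  (hmap : Set.MapsTo f (Set.Icc (c 0) (c N)) (Set.Icc (c 0) (c N)))

lemma atom_init_mono : ∀ (w : List (Fin N)) {A B : Set ℝ}, A ⊆ B →
    w.foldl (fun A i => closure (f '' (A ∩ ivlPiece N c i))) A ⊆
    w.foldl (fun A i => closure (f '' (A ∩ ivlPiece N c i))) B := by
  intro w
  induction w with
  | nil => intro A B h; exact h
  | cons a w ih =>
    intro A B h
    simp only [List.foldl_cons]
    exact ih (closure_mono (Set.image_mono (Set.inter_subset_inter_left _ h)))

include hmap in
lemma atom_cons_subset (a : Fin N) (w : List (Fin N)) :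
    ivlAtom N c f (a :: w) ⊆ ivlAtom N c f w := by
  unfold ivlAtom
  simp only [List.foldl_cons]
  apply atom_init_mono
  apply closure_minimal _ isClosed_Icc
  rintro z ⟨y, hy, rfl⟩
  exact hmap hy.1

include hmap in
lemma LRn_antitone {x : ℝ} (n : ℕ) :
    ivlDeltaLRn N c f (n + 1) x ⊆ ivlDeltaLRn N c f n x := by
  rintro y ⟨i, h1, h2, rfl, w, hwlen, hcmem, ⟨t1, hL⟩, ⟨t2, hR⟩⟩
  obtain ⟨a, w', rfl⟩ : ∃ a w', w = a :: w' := by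
    cases w with
    | nil => simp at hwlen
    | cons a w' => exact ⟨a, w', rfl⟩
  have hw'len : w'.length = n := by simpa using hwlen
  have hsub := atom_cons_subset hmap a w'
  have e1 : t1 + (n + 1) = (t1 + 1) + n := by omega
  have e2 : t2 + (n + 1) = (t2 + 1) + n := by omega
  rw [e1] at hL
  rw [e2] at hR
  exact ⟨i, h1, h2, rfl, w', hw'len, hsub hcmem,
    ⟨t1 + 1, hsub hL.1, hL.2⟩, ⟨t2 + 1, hsub hR.1, hR.2⟩⟩

include hmap in
lemma LRn_chain {x : ℝ} {a b : ℕ} (h : a ≤ b) :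
    ivlDeltaLRn N c f b x ⊆ ivlDeltaLRn N c f a x := by
  induction b with
  | zero => rw [Nat.le_zero.mp h]
  | succ k ih =>
    rcases Nat.lt_succ_iff_lt_or_eq.mp (Nat.lt_succ_of_le h) with h' | h'
    · exact (LRn_antitone hmap k).trans (ih (by omega))
    · rw [h']

include hmap in
lemma LRn_stab {x : ℝ} : ∃ m : ℕ, 1 ≤ m ∧
    (∀ n, m ≤ n → ivlDeltaLRn N c f n x = ivlDeltaLRn N c f m x) ∧
    ivlDeltaLR N c f x = ivlDeltaLRn N c f m x := by
  have hfin : ∀ n, (ivlDeltaLRn N c f n x).Finite :=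
    fun n => delta_finite.subset LRn_subset_delta
  set k : ℕ → ℕ := fun n => (ivlDeltaLRn N c f n x).ncard with hk
  obtain ⟨m', hm'⟩ : ∃ m', k m' = sInf (Set.range k) :=
    Nat.sInf_mem (Set.range_nonempty k)
  set m := max m' 1 with hm
  have hmm : ∀ n, m ≤ n → ivlDeltaLRn N c f n x = ivlDeltaLRn N c f m x := by
    intro n hn
    have hsub : ivlDeltaLRn N c f n x ⊆ ivlDeltaLRn N c f m x := LRn_chain hmap hn
    have hcard : (ivlDeltaLRn N c f m x).ncard ≤ (ivlDeltaLRn N c f n x).ncard := by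
      have h1 : ivlDeltaLRn N c f m x ⊆ ivlDeltaLRn N c f m' x :=
        LRn_chain hmap (le_max_left _ _)
      have h2 : k m ≤ k m' := Set.ncard_le_ncard h1 (hfin m')
      have h3 : sInf (Set.range k) ≤ k n := Nat.sInf_le ⟨n, rfl⟩
      calc (ivlDeltaLRn N c f m x).ncard ≤ k m' := h2
        _ = sInf (Set.range k) := hm'
        _ ≤ k n := h3
    exact Set.eq_of_subset_of_ncard_le hsub hcard (hfin m)
  refine ⟨m, le_max_right _ _, hmm, ?_⟩
  ext y
  constructor
  · intro hy
    exact hy m (le_max_right _ _)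
  · intro hy n hn
    rcases le_or_gt m n with h | h
    · rw [hmm n h]; exact hy
    · exact LRn_chain hmap h.le hy

end Mono


/-- Eventually `p(θ,n) = n·#Δ_lr(x) + β(x)` with
`p(θ,1) − #Δ_lr(x) ≤ β(x) ≤ p(θ,1) − #Δ + m₀(#Δ − #Δ_lr(x))`. -/
theorem stmt11
    (N : ℕ) (hN : 2 ≤ N) (c : ℕ → ℝ) (hc : ∀ i : ℕ, i < N → c i < c (i + 1))
    (f : ℝ → ℝ) (hmap : Set.MapsTo f (Set.Icc (c 0) (c N)) (Set.Icc (c 0) (c N)))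
    (lam : ℝ) (hlam : lam ∈ Set.Ioo (0 : ℝ) 1)
    (hcontr : ∀ i : Fin N, ∀ x ∈ ivlPiece N c i, ∀ y ∈ ivlPiece N c i,
      |f x - f y| ≤ lam * |x - y|)
    (hsep : ∃ g : Fin N → ℝ → ℝ, ∀ i : Fin N,
      ContinuousOn (g i) (closure (ivlPiece N c i)) ∧
      Set.EqOn (g i) f (ivlPiece N c i) ∧
      Set.InjOn (g i) (closure (ivlPiece N c i)) ∧
      ∀ j : Fin N, j ≠ i →
        Disjoint (g i '' closure (ivlPiece N c i)) (g j '' closure (ivlPiece N c j)))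
    (x : ℝ) (hx : x ∈ Set.Icc (c 0) (c N))
    (hxD : ∀ t : ℕ, f^[t] x ∉ ivlDelta N c)
    (θ : ℕ → Fin N) (hθ : ∀ t : ℕ, f^[t] x ∈ ivlPiece N c (θ t))
    :
    ∃ m₀ : ℕ, ∃ β : ℤ, 1 ≤ m₀ ∧
      (∀ n : ℕ, m₀ ≤ n →
        (seqComplexity θ n : ℤ) = (n : ℤ) * ((ivlDeltaLR N c f x).ncard : ℤ) + β) ∧
      (seqComplexity θ 1 : ℤ) - ((ivlDeltaLR N c f x).ncard : ℤ) ≤ β ∧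
      β ≤ (seqComplexity θ 1 : ℤ) - ((ivlDelta N c).ncard : ℤ) +
        (m₀ : ℤ) * (((ivlDelta N c).ncard : ℤ) - ((ivlDeltaLR N c f x).ncard : ℤ)) := by
  obtain ⟨g, hg⟩ := hsep
  obtain ⟨n₂, hn₂1, hsmall⟩ := exists_small hN hc hmap hlam hcontr
  obtain ⟨m, hm1, hstab, hLR⟩ := LRn_stab hmap (x := x)
  set K := (ivlDeltaLR N c f x).ncard with hK
  set m₀ := max m n₂ with hm₀def
  have hm₀1 : 1 ≤ m₀ := le_trans hn₂1 (le_max_right _ _)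
  have hLRcard : ∀ n, m₀ ≤ n → (ivlDeltaLRn N c f n x).ncard = K := by
    intro n hn
    rw [hstab n (le_trans (le_max_left _ _) hn), hK, hLR]
  have hstep : ∀ n, m₀ ≤ n → seqComplexity θ (n + 1) = seqComplexity θ n + K := by
    intro n hn
    rw [step_eq_small hN hc hmap hθ hg n
      (fun w hwl => hsmall n (le_trans (le_max_right _ _) hn) w hwl),
      hLRcard n hn]
  have hind : ∀ d, seqComplexity θ (m₀ + d) = seqComplexity θ m₀ + d * K := by
    intro d
    induction d with
    | zero => simp
    | succ d ih =>
      have h1 := hstep (m₀ + d) (Nat.le_add_right _ _)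
      have h2 : m₀ + (d + 1) = (m₀ + d) + 1 := rfl
      rw [h2, h1, ih]
      ring
  have hK_le : ∀ j, 1 ≤ j → K ≤ (ivlDeltaLRn N c f j x).ncard := by
    intro j hj
    rw [hK]
    apply Set.ncard_le_ncard _ (delta_finite.subset LRn_subset_delta)
    intro y hy
    exact hy j hj
  have hlow : ∀ j, 1 ≤ j → seqComplexity θ j + K ≤ seqComplexity θ (j + 1) := by
    intro j hj
    have h1 := step_lower hN hc hmap hθ hg (x := x) j
    have h2 := hK_le j hj
    omega
  have hbnd : ∀ d, seqComplexity θ 1 + d * K ≤ seqComplexity θ (1 + d) ∧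
      seqComplexity θ (1 + d) ≤ seqComplexity θ 1 + d * (ivlDelta N c).ncard := by
    intro d
    induction d with
    | zero => simp
    | succ d ih =>
      have h1 := hlow (1 + d) (by omega)
      have h2 := step_upper hN hc hmap hθ hg (x := x) (1 + d)
      have h3 : 1 + (d + 1) = (1 + d) + 1 := by omega
      rw [h3]
      constructor
      · calc seqComplexity θ 1 + (d + 1) * K
            = (seqComplexity θ 1 + d * K) + K := by ring
          _ ≤ seqComplexity θ (1 + d) + K := Nat.add_le_add_right ih.1 K
          _ ≤ seqComplexity θ ((1 + d) + 1) := h1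
      · calc seqComplexity θ ((1 + d) + 1)
            ≤ seqComplexity θ (1 + d) + (ivlDelta N c).ncard := h2
          _ ≤ (seqComplexity θ 1 + d * (ivlDelta N c).ncard) + (ivlDelta N c).ncard :=
            Nat.add_le_add_right ih.2 _
          _ = seqComplexity θ 1 + (d + 1) * (ivlDelta N c).ncard := by ring
  obtain ⟨hb1, hb2⟩ := hbnd (m₀ - 1)
  have hm₀e : 1 + (m₀ - 1) = m₀ := by omega
  rw [hm₀e] at hb1 hb2
  refine ⟨m₀, (seqComplexity θ m₀ : ℤ) - (m₀ : ℤ) * (K : ℤ), hm₀1, ?_, ?_, ?_⟩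
  · intro n hn
    have h := hind (n - m₀)
    have he : m₀ + (n - m₀) = n := by omega
    rw [he] at h
    have hcast : (seqComplexity θ n : ℤ) =
        (seqComplexity θ m₀ : ℤ) + ((n - m₀ : ℕ) : ℤ) * (K : ℤ) := by
      exact_mod_cast h
    have hsub : ((n - m₀ : ℕ) : ℤ) = (n : ℤ) - (m₀ : ℤ) := by
      have := Nat.cast_sub (R := ℤ) hn
      exact this
    rw [hcast, hsub]
    ring
  · have : (seqComplexity θ 1 : ℤ) + ((m₀ : ℤ) - 1) * (K : ℤ) ≤
        (seqComplexity θ m₀ : ℤ) := by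
      have hc1 : ((m₀ - 1 : ℕ) : ℤ) = (m₀ : ℤ) - 1 := by
        have := Nat.cast_sub (R := ℤ) hm₀1
        simpa using this
      calc (seqComplexity θ 1 : ℤ) + ((m₀ : ℤ) - 1) * (K : ℤ)
          = ((seqComplexity θ 1 + (m₀ - 1) * K : ℕ) : ℤ) := by
            push_cast [hc1]; ring
        _ ≤ (seqComplexity θ m₀ : ℤ) := by exact_mod_cast hb1
    linarith
  · have : (seqComplexity θ m₀ : ℤ) ≤
        (seqComplexity θ 1 : ℤ) + ((m₀ : ℤ) - 1) * ((ivlDelta N c).ncard : ℤ) := by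
      have hc1 : ((m₀ - 1 : ℕ) : ℤ) = (m₀ : ℤ) - 1 := by
        have := Nat.cast_sub (R := ℤ) hm₀1
        simpa using this
      calc (seqComplexity θ m₀ : ℤ)
          ≤ ((seqComplexity θ 1 + (m₀ - 1) * (ivlDelta N c).ncard : ℕ) : ℤ) := by
            exact_mod_cast hb2
        _ = (seqComplexity θ 1 : ℤ) + ((m₀ : ℤ) - 1) * ((ivlDelta N c).ncard : ℤ) := by
            push_cast [hc1]; ring
    linarith
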